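/- Let f be positive and Riemann integrable on [0,1] with ln∘f Riemann integrable. Then lim_{n→∞} (f((⌊n^{8/9}⌋+1)/n)·f((⌊n^{8/9}⌋+2)/n)⋯f(n/n))^{1/n} = exp(∫_0^1 ln f(x) dx). -/

import Mathlib

/-!
The `n`-th root of the product is `exp` of the right-endpoint Riemann sum
`n⁻¹ * ∑ log f (k / n)` with its first `m n = ⌊n ^ (8/9)⌋` terms removed. The full sums tend to
`∫ log f = L`. A Riemann integrable function is bounded: for one fine uniform partition, moving a
single tag to an arbitrary point `y` changes the Riemann sum by less than `2`, which bounds the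
value at `y`. So if `|log f| ≤ M`, the removed terms contribute at most
`M * m n / n ≤ M * n ^ (-1/9) → 0`, and continuity of `exp` finishes the proof.
-/

open Filter Finset Real

/-- `f` is Riemann integrable on `[a,b]` with Riemann integral `I`:
for every `ε > 0` there is `δ > 0` such that every tagged partition
`a = x 0 < x 1 < … < x n = b` with mesh `< δ` and tags `ξ k ∈ [x (k-1), x k]`
has Riemann sum within `ε` of `I`. -/
def IsRiemannIntegral (f : ℝ → ℝ) (a b I : ℝ) : Prop :=
  ∀ ε > 0, ∃ δ > 0, ∀ (n : ℕ) (x ξ : ℕ → ℝ),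
    0 < n → x 0 = a → x n = b →
    (∀ k ∈ Finset.Icc 1 n, x (k - 1) < x k) →
    (∀ k ∈ Finset.Icc 1 n, x k - x (k - 1) < δ) →
    (∀ k ∈ Finset.Icc 1 n, ξ k ∈ Set.Icc (x (k - 1)) (x k)) →
    |(∑ k ∈ Finset.Icc 1 n, f (ξ k) * (x k - x (k - 1))) - I| < ε

noncomputable def uniformPartition (a b : ℝ) (n k : ℕ) : ℝ := a + k * ((b - a) / n)

section UniformPartition

variable {a b : ℝ} {n k : ℕ}

@[simp]
lemma uniformPartition_zero : uniformPartition a b n 0 = a := by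
  simp [uniformPartition]

lemma uniformPartition_self (hn : n ≠ 0) : uniformPartition a b n n = b := by
  have : (n : ℝ) ≠ 0 := Nat.cast_ne_zero.2 hn
  simp only [uniformPartition]
  field_simp
  ring

lemma uniformPartition_sub_pred (hk : 1 ≤ k) :
    uniformPartition a b n k - uniformPartition a b n (k - 1) = (b - a) / n := by
  simp only [uniformPartition, Nat.cast_sub hk]
  ring

lemma uniformPartition_pred_lt (hab : a < b) (hn : 0 < n) (hk : 1 ≤ k) :
    uniformPartition a b n (k - 1) < uniformPartition a b n k := by
  have hsub := uniformPartition_sub_pred (a := a) (b := b) (n := n) hk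
  have hstep : 0 < (b - a) / n := div_pos (sub_pos.2 hab) (Nat.cast_pos.2 hn)
  linarith

end UniformPartition

lemma exists_mem_Icc_pred_of_mem_Icc {x : ℕ → ℝ} {n : ℕ} {y : ℝ} (hn : 0 < n)
    (hy : y ∈ Set.Icc (x 0) (x n)) : ∃ j ∈ Icc 1 n, y ∈ Set.Icc (x (j - 1)) (x j) := by
  classical
  have hex : ∃ j, 0 < j ∧ y ≤ x j := ⟨n, hn, hy.2⟩
  set j := Nat.find hex
  obtain ⟨hj0, hyj⟩ : 0 < j ∧ y ≤ x j := Nat.find_spec hex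
  refine ⟨j, mem_Icc.2 ⟨hj0, Nat.find_min' hex ⟨hn, hy.2⟩⟩, ?_, hyj⟩
  rcases Nat.lt_or_ge 1 j with hj1 | hj1
  · exact (not_le.1 fun hy => Nat.find_min hex (show j - 1 < j by omega) ⟨by omega, hy⟩).le
  · rw [show j - 1 = 0 by omega]
    exact hy.1

namespace IsRiemannIntegral

variable {g : ℝ → ℝ} {a b I : ℝ}

lemma eventually_abs_uniformPartition_sum_sub_lt (h : IsRiemannIntegral g a b I) (hab : a < b)
    {ε : ℝ} (hε : 0 < ε) :
    ∀ᶠ n : ℕ in atTop, ∀ ξ : ℕ → ℝ,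
      (∀ k ∈ Icc 1 n, ξ k ∈ Set.Icc (uniformPartition a b n (k - 1)) (uniformPartition a b n k)) →
      |∑ k ∈ Icc 1 n, g (ξ k) * ((b - a) / n) - I| < ε := by
  obtain ⟨δ, hδ, H⟩ := h ε hε
  have hmesh : ∀ᶠ n : ℕ in atTop, (b - a) / n < δ :=
    (tendsto_const_div_atTop_nhds_zero_nat (b - a)).eventually (gt_mem_nhds hδ)
  filter_upwards [hmesh, eventually_gt_atTop 0] with n hmesh hn ξ hξ
  have hsub : ∀ k ∈ Icc 1 n,
      uniformPartition a b n k - uniformPartition a b n (k - 1) = (b - a) / n :=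
    fun k hk => uniformPartition_sub_pred (mem_Icc.1 hk).1
  have := H n (uniformPartition a b n) ξ hn uniformPartition_zero (uniformPartition_self hn.ne')
    (fun k hk => uniformPartition_pred_lt hab hn (mem_Icc.1 hk).1)
    (fun k hk => (hsub k hk).trans_lt hmesh) hξ
  rwa [sum_congr rfl fun k hk => by rw [hsub k hk]] at this

lemma tendsto_uniformPartition_sum (h : IsRiemannIntegral g a b I) (hab : a < b) :
    Tendsto (fun n : ℕ => (b - a) / n * ∑ k ∈ Icc 1 n, g (uniformPartition a b n k))
      atTop (nhds I) := by
  refine Metric.tendsto_nhds.2 fun ε hε => ?_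
  filter_upwards [h.eventually_abs_uniformPartition_sum_sub_lt hab hε, eventually_gt_atTop 0] with n hn hn0
  rw [Real.dist_eq, mul_sum]
  simpa only [mul_comm] using hn (uniformPartition a b n)
    fun k hk => ⟨(uniformPartition_pred_lt hab hn0 (mem_Icc.1 hk).1).le, le_rfl⟩

lemma exists_abs_le (h : IsRiemannIntegral g a b I) (hab : a < b) :
    ∃ M, ∀ y ∈ Set.Icc a b, |g y| ≤ M := by
  obtain ⟨n, hR, hn⟩ :=
    ((h.eventually_abs_uniformPartition_sum_sub_lt hab one_pos).and (eventually_gt_atTop 0)).exists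
  set x := uniformPartition a b n
  set c := (b - a) / n
  have hc : 0 < c := div_pos (sub_pos.2 hab) (Nat.cast_pos.2 hn)
  have hcell : ∀ k ∈ Icc 1 n, x k ∈ Set.Icc (x (k - 1)) (x k) :=
    fun k hk => ⟨(uniformPartition_pred_lt hab hn (mem_Icc.1 hk).1).le, le_rfl⟩
  refine ⟨∑ k ∈ Icc 1 n, |g (x k)| + 2 / c, fun y ⟨hay, hyb⟩ => ?_⟩
  obtain ⟨j, hj, hyj⟩ := exists_mem_Icc_pred_of_mem_Icc (x := x) hn
    ⟨uniformPartition_zero.trans_le hay, hyb.trans_eq (uniformPartition_self hn.ne').symm⟩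
  have hshift : ∑ k ∈ Icc 1 n, g (Function.update x j y k) * c - ∑ k ∈ Icc 1 n, g (x k) * c
      = (g y - g (x j)) * c := by
    rw [← sum_sub_distrib, sum_eq_single_of_mem j hj fun k _ hkj => by
      rw [Function.update_of_ne hkj, sub_self], Function.update_self, sub_mul]
  have hosc : |g y - g (x j)| * c < 2 := by
    have h₁ := hR x hcell
    have h₂ := hR (Function.update x j y) fun k hk => by
      rcases eq_or_ne k j with rfl | hkj
      · rwa [Function.update_self]
      · rw [Function.update_of_ne hkj]; exact hcell k hk
    rw [← abs_of_pos hc, ← abs_mul, ← hshift, abs_lt]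
    rw [abs_lt] at h₁ h₂
    constructor <;> linarith
  have hxj : |g (x j)| ≤ ∑ k ∈ Icc 1 n, |g (x k)| :=
    single_le_sum (f := fun k => |g (x k)|) (fun _ _ => abs_nonneg _) hj
  have hdiff : |g y - g (x j)| ≤ 2 / c := by rw [le_div_iff₀ hc]; exact hosc.le
  linarith [abs_sub_abs_le_abs_sub (g y) (g (x j))]

end IsRiemannIntegral

lemma tendsto_floor_rpow_div_atTop {p : ℝ} (hp : p < 1) :
    Tendsto (fun n : ℕ => (⌊(n : ℝ) ^ p⌋₊ : ℝ) / n) atTop (nhds 0) := by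
  have hpow : Tendsto (fun n : ℕ => (n : ℝ) ^ (p - 1)) atTop (nhds 0) :=
    (tendsto_rpow_neg_atTop (by linarith : 0 < 1 - p)).comp tendsto_natCast_atTop_atTop
      |>.congr fun n => by simp [neg_sub]
  refine squeeze_zero' (Eventually.of_forall fun n => by positivity) ?_ hpow
  filter_upwards [eventually_gt_atTop 0] with n hn
  have hn' : (0 : ℝ) < n := Nat.cast_pos.2 hn
  rw [rpow_sub hn', rpow_one]
  exact div_le_div_of_nonneg_right (Nat.floor_le (by positivity)) hn'.le

section DeletedRiemannSum

variable {g : ℝ → ℝ} {m : ℕ → ℕ}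

lemma eventually_le_of_tendsto_div_zero (hm : Tendsto (fun n => (m n : ℝ) / n) atTop (nhds 0)) :
    ∀ᶠ n in atTop, m n ≤ n := by
  filter_upwards [hm.eventually (gt_mem_nhds one_pos), eventually_gt_atTop 0] with n h hn
  exact_mod_cast ((div_lt_one (Nat.cast_pos.2 hn)).1 h).le

lemma tendsto_inv_mul_sum_Icc_one_of_abs_le {M : ℝ} (hM : ∀ y ∈ Set.Icc (0 : ℝ) 1, |g y| ≤ M)
    (hm : Tendsto (fun n => (m n : ℝ) / n) atTop (nhds 0)) :
    Tendsto (fun n : ℕ => (n : ℝ)⁻¹ * ∑ k ∈ Icc 1 (m n), g (k / n)) atTop (nhds 0) := by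
  refine squeeze_zero_norm' ?_ (by simpa using hm.const_mul M)
  filter_upwards [eventually_le_of_tendsto_div_zero hm] with n hmn
  have hsum : |∑ k ∈ Icc 1 (m n), g (k / n)| ≤ m n * M := by
    refine (abs_sum_le_sum_abs _ _).trans ?_
    refine (sum_le_sum fun k hk => hM _ ⟨by positivity, ?_⟩).trans (by simp)
    exact div_le_one_of_le₀ (by exact_mod_cast (mem_Icc.1 hk).2.trans hmn) n.cast_nonneg
  rw [norm_mul, norm_inv, Real.norm_natCast, Real.norm_eq_abs, mul_div_assoc', mul_comm M,
    inv_mul_eq_div]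
  exact div_le_div_of_nonneg_right hsum n.cast_nonneg

lemma tendsto_inv_mul_sum_Icc_add_one {L M : ℝ}
    (hg : Tendsto (fun n : ℕ => (n : ℝ)⁻¹ * ∑ k ∈ Icc 1 n, g (k / n)) atTop (nhds L))
    (hM : ∀ y ∈ Set.Icc (0 : ℝ) 1, |g y| ≤ M)
    (hm : Tendsto (fun n => (m n : ℝ) / n) atTop (nhds 0)) :
    Tendsto (fun n : ℕ => (n : ℝ)⁻¹ * ∑ k ∈ Icc (m n + 1) n, g (k / n)) atTop (nhds L) := by
  have hdiff := hg.sub (tendsto_inv_mul_sum_Icc_one_of_abs_le hM hm)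
  rw [sub_zero] at hdiff
  refine hdiff.congr' ?_
  filter_upwards [eventually_le_of_tendsto_div_zero hm] with n hmn
  have hIcc : ∀ j, Icc 1 j = Ioc 0 j := fun j => Icc_add_one_left_eq_Ioc 0 j
  rw [← mul_sub, hIcc, hIcc, Icc_add_one_left_eq_Ioc,
    ← sum_Ioc_consecutive _ (Nat.zero_le _) hmn, add_sub_cancel_left]

end DeletedRiemannSum

lemma rpow_prod_eq_exp_mul_sum_log {ι : Type*} {s : Finset ι} {u : ι → ℝ}
    (hu : ∀ i ∈ s, 0 < u i) (r : ℝ) :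
    (∏ i ∈ s, u i) ^ r = exp (r * ∑ i ∈ s, log (u i)) := by
  rw [rpow_def_of_pos (prod_pos hu), log_prod fun i hi => (hu i hi).ne', mul_comm]

theorem geometric_mean_limit_deleted_general (f : ℝ → ℝ) (L : ℝ)
    (hpos : ∀ x ∈ Set.Icc (0 : ℝ) 1, 0 < f x)
    (hlog : IsRiemannIntegral (fun x => Real.log (f x)) 0 1 L) :
    Tendsto (fun n : ℕ =>
      (∏ k ∈ Finset.Icc (⌊(n : ℝ) ^ ((8 : ℝ) / 9)⌋₊ + 1) n, f ((k : ℝ) / n)) ^ ((1 : ℝ) / n))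
      atTop (nhds (Real.exp L)) := by
  obtain ⟨M, hM⟩ := hlog.exists_abs_le zero_lt_one
  have hsum : Tendsto (fun n : ℕ => (n : ℝ)⁻¹ * ∑ k ∈ Icc 1 n, log (f (k / n))) atTop (nhds L) := by
    simpa [uniformPartition, div_eq_mul_inv] using hlog.tendsto_uniformPartition_sum zero_lt_one
  have hmean := tendsto_inv_mul_sum_Icc_add_one (g := fun x => log (f x)) hsum hM
    (tendsto_floor_rpow_div_atTop (by norm_num : (8 : ℝ) / 9 < 1))
  refine ((continuous_exp.tendsto L).comp hmean).congr fun n => ?_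
  rw [Function.comp_apply, rpow_prod_eq_exp_mul_sum_log _, one_div]
  intro k hk
  exact hpos _ ⟨by positivity, div_le_one_of_le₀ (by exact_mod_cast (mem_Icc.1 hk).2) n.cast_nonneg⟩

theorem geometric_mean_limit_deleted (f : ℝ → ℝ) (I L : ℝ)
    (hpos : ∀ x ∈ Set.Icc (0 : ℝ) 1, 0 < f x)
    (hf : IsRiemannIntegral f 0 1 I)
    (hlog : IsRiemannIntegral (fun x => Real.log (f x)) 0 1 L) :
    Tendsto (fun n : ℕ =>
      (∏ k ∈ Finset.Icc (⌊(n : ℝ) ^ ((8 : ℝ) / 9)⌋₊ + 1) n, f ((k : ℝ) / n)) ^ ((1 : ℝ) / n))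
      atTop (nhds (Real.exp L)) :=
  geometric_mean_limit_deleted_general f L hpos hlog
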